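/- arXiv:1807.02767 — 4 statements merged into one kernel-verified Lean document; each statement's English description precedes it below -/
import Mathlib

section
/- For F, G ∈ Δ⁺, the quantile function of τ_M(F,G), where τ_M(F,G)(x) = sup{min(F(s), G(t)) | s + t = x}, equals F̂ + Ĝ; that is, (τ_M(F,G))^(w) = F̂(w) + Ĝ(w) for every w ∈ (0,1). -/
open Filter Topology Set

noncomputable section

/-- A distance distribution function: nondecreasing, with values in `[0,1]`,
left-continuous, `F 0 = 0` and `sup F = 1`. -/
def IsDDF (F : ℝ → ℝ) : Prop :=
  Monotone F ∧ (∀ t, F t ∈ Set.Icc (0:ℝ) 1) ∧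
  (∀ t : ℝ, Tendsto F (nhdsWithin t (Set.Iio t)) (nhds (F t))) ∧
  F 0 = 0 ∧ (⨆ t, F t) = 1

/-- A proper d.f.: `F t → 1` as `t → ∞`. -/
def IsProper (F : ℝ → ℝ) : Prop := Tendsto F atTop (nhds 1)

/-- The unit step function at `0`. -/
def H0 : ℝ → ℝ := fun t => if 0 < t then 1 else 0

/-- The quantile function `F̂(w) = sup {t | F t < w}`, valued in `EReal`. -/
noncomputable def qhat (F : ℝ → ℝ) (w : ℝ) : EReal :=
  sSup ((fun t : ℝ => (t : EReal)) '' {t | F t < w})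

/-- The triangle function `τ_M(F,G)(x) = sup_{s+t=x} min (F s) (G t)`. -/
noncomputable def tauM (F G : ℝ → ℝ) : ℝ → ℝ :=
  fun x => ⨆ s : ℝ, min (F s) (G (x - s))

lemma coe_sSup_image {A : Set ℝ} (hne : A.Nonempty) (hbdd : BddAbove A) :
    sSup ((fun t : ℝ => (t : EReal)) '' A) = ((sSup A : ℝ) : EReal) := by
  refine le_antisymm (sSup_le ?_) ?_
  · rintro x ⟨t, ht, rfl⟩
    show (t : EReal) ≤ _
    exact_mod_cast le_csSup hbdd ht
  · rw [le_sSup_iff]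
    intro b hb
    induction b with
    | bot =>
      obtain ⟨t, ht⟩ := hne
      exact absurd (hb ⟨t, ht, rfl⟩) (by simp)
    | coe r =>
      have h : ∀ t ∈ A, t ≤ r := fun t ht =>
        EReal.coe_le_coe_iff.mp (hb ⟨t, ht, rfl⟩)
      exact EReal.coe_le_coe_iff.mpr (csSup_le hne h)
    | top => exact le_top

/-- Basic facts about the quantile set of a DDF at level `w ∈ (0,1)`. -/
lemma ddf_quantile_facts {F : ℝ → ℝ} (hF : IsDDF F) {w : ℝ} (hw0 : 0 < w) (hw1 : w < 1) :
    {t | F t < w}.Nonempty ∧ BddAbove {t | F t < w} ∧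
    (∀ t < sSup {t | F t < w}, F t < w) ∧ (∀ t, sSup {t | F t < w} < t → w ≤ F t) := by
  obtain ⟨hmono, hbox, -, h0, hsup⟩ := hF
  have hne : ({t | F t < w}).Nonempty := ⟨0, by simpa [h0] using hw0⟩
  have ht0 : ∃ t0, w ≤ F t0 := by
    by_contra h
    push_neg at h
    have : (⨆ t, F t) ≤ w := ciSup_le fun t => (h t).le
    rw [hsup] at this
    linarith
  obtain ⟨t0, ht0⟩ := ht0
  have hbdd : BddAbove {t | F t < w} := by
    refine ⟨t0, fun t ht => ?_⟩
    by_contra hlt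
    push_neg at hlt
    exact absurd (lt_of_le_of_lt (ht0.trans (hmono hlt.le)) ht) (lt_irrefl _)
  refine ⟨hne, hbdd, ?_, ?_⟩
  · intro t ht
    obtain ⟨t', ht', htt'⟩ := exists_lt_of_lt_csSup hne ht
    exact lt_of_le_of_lt (hmono htt'.le) ht'
  · intro t ht
    by_contra h
    push_neg at h
    exact absurd (le_csSup hbdd h) (not_le.mpr ht)

/-- The quantile of `τ_M(F,G)` is `F̂ + Ĝ` on `(0,1)`. -/
theorem qhat_tauM (F G : ℝ → ℝ) (hF : IsDDF F) (hG : IsDDF G) :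
    ∀ w ∈ Set.Ioo (0:ℝ) 1, qhat (tauM F G) w = qhat F w + qhat G w := by
  rintro w ⟨hw0, hw1⟩
  obtain ⟨hAne, hAbdd, hFlt, hFge⟩ := ddf_quantile_facts hF hw0 hw1
  obtain ⟨hBne, hBbdd, hGlt, hGge⟩ := ddf_quantile_facts hG hw0 hw1
  set a := sSup {t | F t < w} with ha
  set b := sSup {t | G t < w} with hb
  have hbdd_range : ∀ x : ℝ, BddAbove (Set.range fun s => min (F s) (G (x - s))) := by
    intro x
    refine ⟨1, ?_⟩
    rintro _ ⟨s, rfl⟩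
    exact le_trans (min_le_left _ _) (hF.2.1 s).2
  -- For x > a + b, tauM F G x ≥ w
  have hge : ∀ x : ℝ, a + b < x → w ≤ tauM F G x := by
    intro x hx
    set s := a + (x - a - b) / 2 with hs
    have hsa : a < s := by rw [hs]; linarith
    have hsb : b < x - s := by rw [hs]; ring_nf; linarith
    have h1 : w ≤ min (F s) (G (x - s)) :=
      le_min (hFge s hsa) (hGge _ hsb)
    exact le_trans h1 (le_ciSup (hbdd_range x) s)
  -- For x < a + b, tauM F G x < w
  have hlt : ∀ x : ℝ, x < a + b → tauM F G x < w := by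
    intro x hx
    set δ := (a + b - x) / 2 with hδ
    have hδpos : 0 < δ := by rw [hδ]; linarith
    have hc : max (F (a - δ)) (G (b - δ)) < w :=
      max_lt (hFlt _ (by linarith)) (hGlt _ (by linarith))
    refine lt_of_le_of_lt (ciSup_le fun s => ?_) hc
    rcases le_or_gt s (a - δ) with h | h
    · exact le_trans (min_le_left _ _) (le_max_of_le_left (hF.1 h))
    · have : x - s ≤ b - δ := by rw [hδ] at h ⊢; linarith
      exact le_trans (min_le_right _ _) (le_max_of_le_right (hG.1 this))
  -- identify the quantile set of tauM F G
  have hSne : ({x | tauM F G x < w}).Nonempty :=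
    ⟨a + b - 1, hlt _ (by linarith)⟩
  have hSbdd : BddAbove {x | tauM F G x < w} := by
    refine ⟨a + b, fun x hx => ?_⟩
    by_contra h
    push_neg at h
    exact absurd (hge x h) (not_le.mpr hx)
  have hSsup : sSup {x | tauM F G x < w} = a + b := by
    refine le_antisymm (csSup_le hSne ?_) ?_
    · intro x hx
      by_contra h
      push_neg at h
      exact absurd (hge x h) (not_le.mpr hx)
    · refine le_of_forall_lt fun c hc => ?_
      have hc' : c < a + b := hc
      obtain ⟨y, hy1, hy2⟩ := exists_between hc'
      exact lt_of_lt_of_le hy1 (le_csSup hSbdd (hlt y hy2))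
  rw [qhat, qhat, qhat, coe_sSup_image hSne hSbdd, coe_sSup_image hAne hAbdd,
    coe_sSup_image hBne hBbdd, hSsup]
  exact_mod_cast rfl
end
end

section
/- Let (V, ν) be a Šerstnev PN-space with triangle function τ_M, and define ‖x‖_w = (ν_x)^(w) = sup{t | ν_x(t) < w} for w ∈ (0,1). Then: (i) ‖x‖_w ≥ 0 and ‖x‖_w = 0 for all w iff x = 0; (ii) ‖αx‖_w = |α|·‖x‖_w for all scalars α; (iii) ‖x+y‖_w ≤ ‖x‖_w + ‖y‖_w. In particular, for each fixed w ∈ (0,1), ‖·‖_w is a seminorm on V, and the family is separating. -/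
open Filter Topology Set

noncomputable section

/-- A Šerstnev probabilistic normed space under `τ_M`, with all `ν_x` proper. -/
structure SPN (V : Type*) [AddCommGroup V] [Module ℝ V] where
  nu : V → ℝ → ℝ
  ddf : ∀ x, IsDDF (nu x)
  proper : ∀ x, IsProper (nu x)
  nu_eq_iff : ∀ x, nu x = H0 ↔ x = 0
  nu_add : ∀ x y t, tauM (nu x) (nu y) t ≤ nu (x + y) t
  nu_smul : ∀ a : ℝ, a ≠ 0 → ∀ x t, nu (a • x) t = nu x (t / |a|)

/-- The quantile seminorm `‖x‖_w = sup {t | ν_x t < w}`. -/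
noncomputable def pnorm {V : Type*} [AddCommGroup V] [Module ℝ V]
    (S : SPN V) (x : V) (w : ℝ) : ℝ :=
  sSup {t | S.nu x t < w}

/-- The strong topology of a PN-space, generated by the balls of the seminorms `‖·‖_w`. -/
def strongTop {V : Type*} [AddCommGroup V] [Module ℝ V] (S : SPN V) : TopologicalSpace V :=
  TopologicalSpace.generateFrom
    {U | ∃ (x : V) (w r : ℝ), w ∈ Set.Ioo (0:ℝ) 1 ∧ 0 < r ∧
      U = {y | pnorm S (y - x) w < r}}

/-- A strong Cauchy sequence. -/
def StrongCauchy {V : Type*} [AddCommGroup V] [Module ℝ V] (S : SPN V) (x : ℕ → V) : Prop :=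
  ∀ t : ℝ, 0 < t → ∃ N, ∀ m ≥ N, ∀ n ≥ N, 1 - t < S.nu (x n - x m) t

/-- Strong convergence of a sequence to a point. -/
def StrongLim {V : Type*} [AddCommGroup V] [Module ℝ V] (S : SPN V) (x : ℕ → V) (p : V) : Prop :=
  ∀ t : ℝ, 0 < t → ∃ N, ∀ n ≥ N, 1 - t < S.nu (x n - p) t

/-- Strong completeness: every strong Cauchy sequence strongly converges. -/
def StrongComplete {V : Type*} [AddCommGroup V] [Module ℝ V] (S : SPN V) : Prop :=
  ∀ x : ℕ → V, StrongCauchy S x → ∃ p, StrongLim S x p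

/-! Everything rests on two facts about the quantile `sSup {t | F t < w}` of a proper d.f.:
it is `< t` only if `w ≤ F t`, and it is `≤ c` as soon as `w ≤ F t` for every `t > c`.
For subadditivity, split any `t > ‖x‖_w + ‖y‖_w` as `s + (t - s)` with both parts above the
respective quantiles; then `ν_{x+y} t ≥ τ_M(ν_x, ν_y) t ≥ min (ν_x s) (ν_y (t - s)) ≥ w`.
Homogeneity holds because the level set `{t | ν_{a•x} t < w}` is `|a|` times that of `ν_x`.
If all quantiles of `ν_x` vanish, then `ν_x t ≥ w` for all `t > 0` and `w < 1`, so `ν_x = H0`. -/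

open Pointwise

namespace IsDDF

variable {F : ℝ → ℝ}

theorem nonneg (hF : IsDDF F) (t : ℝ) : 0 ≤ F t := (hF.2.1 t).1

theorem le_one (hF : IsDDF F) (t : ℝ) : F t ≤ 1 := (hF.2.1 t).2

theorem eq_zero_of_nonpos (hF : IsDDF F) {t : ℝ} (ht : t ≤ 0) : F t = 0 :=
  le_antisymm (hF.2.2.2.1 ▸ hF.1 ht) (hF.nonneg t)

theorem zero_mem_setOf_lt (hF : IsDDF F) {w : ℝ} (hw : 0 < w) : (0 : ℝ) ∈ {t | F t < w} := by
  simpa only [mem_ofPred_eq, hF.eq_zero_of_nonpos le_rfl] using hw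

end IsDDF

theorem IsProper.bddAbove_setOf_lt {F : ℝ → ℝ} (hF : IsProper F) {w : ℝ} (hw : w < 1) :
    BddAbove {t | F t < w} := by
  obtain ⟨T, hT⟩ := ((hF.eventually (eventually_gt_nhds hw)).exists_forall_of_atTop)
  exact ⟨T, fun t ht => le_of_not_ge fun hTt => (hT t hTt).not_gt ht⟩

section Quantile

variable {F : ℝ → ℝ} {w c : ℝ}

theorem le_of_sSup_setOf_lt_lt (hb : BddAbove {t | F t < w}) {t : ℝ}
    (ht : sSup {t | F t < w} < t) : w ≤ F t :=
  le_of_not_gt fun hFt => (le_csSup hb hFt).not_gt ht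

theorem sSup_setOf_lt_le (hne : {t | F t < w}.Nonempty) (h : ∀ t, c < t → w ≤ F t) :
    sSup {t | F t < w} ≤ c :=
  csSup_le hne fun t hFt => le_of_not_gt fun hct => (h t hct).not_gt hFt

theorem setOf_comp_div_lt (hc : 0 < c) (F : ℝ → ℝ) (w : ℝ) :
    {t | F (t / c) < w} = c • {t | F t < w} := by
  ext t
  refine ⟨fun ht => ⟨t / c, ht, mul_div_cancel₀ t hc.ne'⟩, ?_⟩
  rintro ⟨s, hs, rfl⟩
  simpa only [mem_ofPred_eq, smul_eq_mul, mul_div_cancel_left₀ s hc.ne'] using hs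

theorem sSup_setOf_H0_lt (hw0 : 0 < w) (hw1 : w ≤ 1) : sSup {t | H0 t < w} = 0 := by
  have hset : {t | H0 t < w} = Iic 0 := by
    ext t
    by_cases ht : 0 < t <;> simp [H0, ht, hw0, hw1.not_gt, not_lt.1]
  rw [hset, csSup_Iic]

theorem IsDDF.eq_H0_of_sSup_setOf_lt_eq_zero (hF : IsDDF F) (hp : IsProper F)
    (h : ∀ w ∈ Ioo (0 : ℝ) 1, sSup {t | F t < w} = 0) : F = H0 := by
  funext t
  rcases le_or_gt t 0 with ht | ht
  · simp [H0, hF.eq_zero_of_nonpos ht, ht.not_gt]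
  · have hw : ∀ w < 1, w ≤ F t := fun w hw1 => by
      rcases le_or_gt w 0 with hw0 | hw0
      · exact hw0.trans (hF.nonneg t)
      · refine le_of_sSup_setOf_lt_lt (hp.bddAbove_setOf_lt hw1) ?_
        rwa [h w ⟨hw0, hw1⟩]
    simp only [H0, ht, if_true]
    exact le_antisymm (hF.le_one t) (le_of_forall_lt_imp_le_of_dense hw)

theorem min_le_tauM {G : ℝ → ℝ} (hF : BddAbove (range F)) (s u : ℝ) :
    min (F s) (G u) ≤ tauM F G (s + u) := by
  obtain ⟨M, hM⟩ := hF
  have hb : BddAbove (range fun r => min (F r) (G (s + u - r))) :=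
    ⟨M, forall_mem_range.2 fun r => (min_le_left _ _).trans (hM (mem_range_self r))⟩
  simpa only [tauM, add_sub_cancel_left] using le_ciSup hb s

end Quantile

namespace SPN

variable {V : Type*} [AddCommGroup V] [Module ℝ V] (S : SPN V)

theorem bddAbove_setOf_nu_lt (x : V) {w : ℝ} (hw : w < 1) : BddAbove {t | S.nu x t < w} :=
  (S.proper x).bddAbove_setOf_lt hw

theorem pnorm_nonneg (x : V) {w : ℝ} (hw0 : 0 < w) (hw1 : w < 1) : 0 ≤ pnorm S x w :=
  le_csSup (S.bddAbove_setOf_nu_lt x hw1) ((S.ddf x).zero_mem_setOf_lt hw0)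

theorem pnorm_zero {w : ℝ} (hw0 : 0 < w) (hw1 : w ≤ 1) : pnorm S 0 w = 0 := by
  rw [pnorm, (S.nu_eq_iff 0).2 rfl]
  exact sSup_setOf_H0_lt hw0 hw1

theorem eq_zero_of_pnorm_eq_zero {x : V} (h : ∀ w ∈ Ioo (0 : ℝ) 1, pnorm S x w = 0) : x = 0 :=
  (S.nu_eq_iff x).1 ((S.ddf x).eq_H0_of_sSup_setOf_lt_eq_zero (S.proper x) h)

theorem pnorm_smul (a : ℝ) (x : V) {w : ℝ} (hw0 : 0 < w) (hw1 : w ≤ 1) :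
    pnorm S (a • x) w = |a| * pnorm S x w := by
  rcases eq_or_ne a 0 with rfl | ha
  · rw [zero_smul, abs_zero, zero_mul, S.pnorm_zero hw0 hw1]
  · have hset : {t | S.nu (a • x) t < w} = |a| • {t | S.nu x t < w} := by
      simp_rw [S.nu_smul a ha x]
      exact setOf_comp_div_lt (abs_pos.2 ha) _ _
    rw [pnorm, hset, Real.sSup_smul_of_nonneg (abs_nonneg a), smul_eq_mul, pnorm]

theorem pnorm_add_le (x y : V) {w : ℝ} (hw0 : 0 < w) (hw1 : w < 1) :
    pnorm S (x + y) w ≤ pnorm S x w + pnorm S y w := by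
  refine sSup_setOf_lt_le ⟨0, (S.ddf _).zero_mem_setOf_lt hw0⟩ fun t ht => ?_
  obtain ⟨s, hxs, hsy⟩ := exists_between (lt_sub_iff_add_lt.2 ht)
  have hx : w ≤ S.nu x s := le_of_sSup_setOf_lt_lt (S.bddAbove_setOf_nu_lt x hw1) hxs
  have hy : w ≤ S.nu y (t - s) :=
    le_of_sSup_setOf_lt_lt (S.bddAbove_setOf_nu_lt y hw1) (lt_sub_comm.1 hsy)
  calc w ≤ min (S.nu x s) (S.nu y (t - s)) := le_min hx hy
    _ ≤ tauM (S.nu x) (S.nu y) (s + (t - s)) :=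
      min_le_tauM ⟨1, forall_mem_range.2 (S.ddf x).le_one⟩ s (t - s)
    _ = tauM (S.nu x) (S.nu y) t := by rw [add_sub_cancel]
    _ ≤ S.nu (x + y) t := S.nu_add x y t

end SPN

/-- Theorem 3.5: the quantile seminorms of a Šerstnev PN-space are nonnegative,
separating (vanishing for all `w` iff `x = 0`), absolutely homogeneous and
subadditive; in particular each `‖·‖_w` is a seminorm. -/
theorem pnorm_seminorm_properties {V : Type*} [AddCommGroup V] [Module ℝ V] (S : SPN V) :
    (∀ x : V, ∀ w ∈ Set.Ioo (0:ℝ) 1, 0 ≤ pnorm S x w) ∧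
    (∀ x : V, (∀ w ∈ Set.Ioo (0:ℝ) 1, pnorm S x w = 0) ↔ x = 0) ∧
    (∀ (a : ℝ) (x : V), ∀ w ∈ Set.Ioo (0:ℝ) 1, pnorm S (a • x) w = |a| * pnorm S x w) ∧
    (∀ x y : V, ∀ w ∈ Set.Ioo (0:ℝ) 1,
      pnorm S (x + y) w ≤ pnorm S x w + pnorm S y w) := by
  refine ⟨fun x w hw => S.pnorm_nonneg x hw.1 hw.2, fun x => ⟨S.eq_zero_of_pnorm_eq_zero, ?_⟩,
    fun a x w hw => S.pnorm_smul a x hw.1 hw.2.le, fun x y w hw => S.pnorm_add_le x y hw.1 hw.2⟩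
  rintro rfl w hw
  exact S.pnorm_zero hw.1 hw.2.le
end
end

section
/- Let V be a real vector space and p : V × (0,1) → [0,∞) satisfy: (i) p(x,·) is nondecreasing for each x; (ii) p(·,w) is a seminorm for each w; (iii) the family {p(·,w)} is separating. Then the map ν : V → Δ⁺ defined by ν_x(t) = m({w ∈ (0,1) | p(x,w) < t}) (m = Lebesgue measure, ν_x(t) = 0 for t ≤ 0) makes (V, ν) a Šerstnev PN-space under τ_M, and moreover ‖x‖_w := (ν_x)^(w) equals the left limit l⁻p(x,w) = sup_{w' < w} p(x,w') for all x ∈ V and w ∈ (0,1). -/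
open Filter Topology Set

noncomputable section

/-!
`ν_x` is the distribution function of `w ↦ p(x,w)` under Lebesgue measure on `(0,1)`. Since
`p(x,·)` is nondecreasing, `ν_x` is a generalized inverse of it, which makes the quantile
`‖x‖_w` the left limit of `p(x,·)` at `w`. The sublevel sets
`{w | p(x,w) < t}` are initial segments of `(0,1)`, so any two of them are nested; hence the
minimum in `τ_M` is the measure of an intersection `{p(x,·) < s} ∩ {p(y,·) < t - s}`, which
lies in `{p(x+y,·) < t}` by the triangle inequality.
-/

open MeasureTheory

namespace SeminormFamilyPN

def sublevel (f : ℝ → ℝ) (t : ℝ) : Set ℝ := {w | w ∈ Ioo (0:ℝ) 1 ∧ f w < t}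

def levelDF (f : ℝ → ℝ) (t : ℝ) : ℝ := (volume (sublevel f t)).toReal

variable {f g h : ℝ → ℝ}

lemma sublevel_subset_Ioo (f : ℝ → ℝ) (t : ℝ) : sublevel f t ⊆ Ioo 0 1 := fun _ hw => hw.1

lemma volume_sublevel_ne_top (f : ℝ → ℝ) (t : ℝ) : volume (sublevel f t) ≠ ⊤ :=
  ne_top_of_le_ne_top (by simp) (measure_mono (sublevel_subset_Ioo f t))

lemma levelDF_le_levelDF {s t : ℝ} (hst : sublevel f s ⊆ sublevel g t) :
    levelDF f s ≤ levelDF g t :=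
  ENNReal.toReal_mono (volume_sublevel_ne_top g t) (measure_mono hst)

lemma le_levelDF_of_Ioo_subset {w t : ℝ} (hw : 0 ≤ w) (hsub : Ioo 0 w ⊆ sublevel f t) :
    w ≤ levelDF f t := by
  simpa [levelDF, hw] using ENNReal.toReal_mono (volume_sublevel_ne_top f t) (measure_mono hsub)

lemma levelDF_le_of_subset_Ioo {w t : ℝ} (hw : 0 ≤ w) (hsub : sublevel f t ⊆ Ioo 0 w) :
    levelDF f t ≤ w := by
  simpa [levelDF, hw] using
    ENNReal.toReal_mono (measure_Ioo_lt_top (μ := volume)).ne (measure_mono hsub)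

lemma levelDF_mono (f : ℝ → ℝ) : Monotone (levelDF f) :=
  fun _ _ hst => levelDF_le_levelDF fun _ hw => ⟨hw.1, hw.2.trans_le hst⟩

lemma levelDF_mem_Icc (f : ℝ → ℝ) (t : ℝ) : levelDF f t ∈ Icc (0:ℝ) 1 :=
  ⟨ENNReal.toReal_nonneg, by
    simpa using levelDF_le_of_subset_Ioo zero_le_one (sublevel_subset_Ioo f t)⟩

lemma levelDF_of_nonpos (hf : ∀ w ∈ Ioo (0:ℝ) 1, 0 ≤ f w) {t : ℝ} (ht : t ≤ 0) :
    levelDF f t = 0 := by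
  have hempty : sublevel f t = ∅ :=
    eq_empty_of_forall_notMem fun w hw => (hw.2.trans_le ht).not_ge (hf w hw.1)
  simp [levelDF, hempty]

lemma levelDF_le (hf : MonotoneOn f (Ioo 0 1)) {w t : ℝ} (hw : w ∈ Ioo (0:ℝ) 1)
    (ht : t ≤ f w) : levelDF f t ≤ w :=
  levelDF_le_of_subset_Ioo hw.1.le fun _ hu =>
    ⟨hu.1.1, lt_of_not_ge fun hwu => (hu.2.trans_le (ht.trans (hf hw hu.1 hwu))).false⟩

lemma tendsto_levelDF_atTop (f : ℝ → ℝ) : Tendsto (levelDF f) atTop (𝓝 1) := by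
  have hunion : (⋃ t, sublevel f t) = Ioo 0 1 :=
    Subset.antisymm (iUnion_subset (sublevel_subset_Ioo f)) fun w hw =>
      mem_iUnion.2 ⟨f w + 1, hw, lt_add_one _⟩
  have hvol := tendsto_measure_iUnion_atTop (μ := volume)
    (fun s t hst w hw => ⟨hw.1, hw.2.trans_le hst⟩ : Monotone (sublevel f))
  rw [hunion, Real.volume_Ioo, sub_zero, ENNReal.ofReal_one] at hvol
  exact (ENNReal.tendsto_toReal ENNReal.one_ne_top).comp hvol

lemma iSup_levelDF (f : ℝ → ℝ) : ⨆ t, levelDF f t = 1 :=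
  (isLUB_of_tendsto_atTop (levelDF_mono f) (tendsto_levelDF_atTop f)).ciSup_eq

lemma tendsto_levelDF_nhdsLT (f : ℝ → ℝ) (t : ℝ) :
    Tendsto (levelDF f) (𝓝[<] t) (𝓝 (levelDF f t)) := by
  let u : ℕ → ℝ := fun n => t - 1 / (n + 1)
  have hu_lt : ∀ n, u n < t := fun n => sub_lt_self t Nat.one_div_pos_of_nat
  have hu : Tendsto u atTop (𝓝[<] t) :=
    tendsto_nhdsWithin_iff.2
      ⟨by simpa [u] using tendsto_one_div_add_atTop_nhds_zero_nat.const_sub t,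
        Eventually.of_forall hu_lt⟩
  have hunion : (⋃ n, sublevel f (u n)) = sublevel f t := by
    refine Subset.antisymm (iUnion_subset fun n w hw => ⟨hw.1, hw.2.trans (hu_lt n)⟩) ?_
    intro w hw
    obtain ⟨n, hn⟩ := exists_nat_one_div_lt (sub_pos.2 hw.2)
    exact mem_iUnion.2 ⟨n, hw.1, by simp only [u]; linarith⟩
  have hvol := tendsto_measure_iUnion_atTop (μ := volume) (s := fun n => sublevel f (u n))
    fun _ _ hmn w hw => ⟨hw.1, hw.2.trans_le (by simp only [u]; gcongr)⟩
  rw [hunion] at hvol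
  have hlim := (levelDF_mono f).tendsto_nhdsLT t
  rwa [tendsto_nhds_unique (hlim.comp hu)
    ((ENNReal.tendsto_toReal (volume_sublevel_ne_top f t)).comp hvol)] at hlim

lemma isDDF_levelDF (hf : ∀ w ∈ Ioo (0:ℝ) 1, 0 ≤ f w) : IsDDF (levelDF f) :=
  ⟨levelDF_mono f, levelDF_mem_Icc f, tendsto_levelDF_nhdsLT f, levelDF_of_nonpos hf le_rfl,
    iSup_levelDF f⟩

lemma levelDF_eq_H0_iff (hf₀ : ∀ w ∈ Ioo (0:ℝ) 1, 0 ≤ f w) (hf : MonotoneOn f (Ioo 0 1)) :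
    levelDF f = H0 ↔ ∀ w ∈ Ioo (0:ℝ) 1, f w = 0 := by
  constructor
  · intro hH w hw
    by_contra hne
    have hpos : 0 < f w := (hf₀ w hw).lt_of_ne' hne
    have hle := levelDF_le hf hw le_rfl
    rw [hH, H0, if_pos hpos] at hle
    exact hw.2.not_ge hle
  · intro hzero
    funext t
    by_cases ht : 0 < t
    · have hfull : sublevel f t = Ioo 0 1 :=
        Subset.antisymm (sublevel_subset_Ioo f t) fun w hw => ⟨hw, (hzero w hw).symm ▸ ht⟩
      simp [levelDF, hfull, H0, ht]
    · simp [levelDF_of_nonpos hf₀ (not_lt.1 ht), H0, ht]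

lemma levelDF_of_eq_mul {c : ℝ} (hc : 0 < c) (hg : ∀ w ∈ Ioo (0:ℝ) 1, g w = c * f w)
    (t : ℝ) : levelDF g t = levelDF f (t / c) := by
  have hsub : sublevel g t = sublevel f (t / c) := by
    ext w
    exact and_congr_right fun hw => by rw [hg w hw, lt_div_iff₀' hc]
  rw [levelDF, hsub, levelDF]

lemma sublevel_subset_or_subset (hf : MonotoneOn f (Ioo 0 1)) (hg : MonotoneOn g (Ioo 0 1))
    (s t : ℝ) : sublevel f s ⊆ sublevel g t ∨ sublevel g t ⊆ sublevel f s := by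
  by_contra! hne
  obtain ⟨⟨a, haf, hag⟩, ⟨b, hbg, hbf⟩⟩ := And.imp not_subset.1 not_subset.1 hne
  rcases le_total a b with hab | hba
  · exact hag ⟨haf.1, (hg haf.1 hbg.1 hab).trans_lt hbg.2⟩
  · exact hbf ⟨hbg.1, (hf hbg.1 haf.1 hba).trans_lt haf.2⟩

lemma tauM_levelDF_le (hf : MonotoneOn f (Ioo 0 1)) (hg : MonotoneOn g (Ioo 0 1))
    (hh : ∀ w ∈ Ioo (0:ℝ) 1, h w ≤ f w + g w) (t : ℝ) :
    tauM (levelDF f) (levelDF g) t ≤ levelDF h t := by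
  refine ciSup_le fun s => ?_
  have hinter : sublevel f s ∩ sublevel g (t - s) ⊆ sublevel h t := fun w ⟨hwf, hwg⟩ =>
    ⟨hwf.1, (hh w hwf.1).trans_lt (by linarith [hwf.2, hwg.2])⟩
  rcases sublevel_subset_or_subset hf hg s (t - s) with hfg | hgf
  · exact (min_le_left _ _).trans
      (levelDF_le_levelDF fun w hw => hinter ⟨hw, hfg hw⟩)
  · exact (min_le_right _ _).trans
      (levelDF_le_levelDF fun w hw => hinter ⟨hgf hw, hw⟩)

lemma sSup_levelDF_lt_eq (hf : MonotoneOn f (Ioo 0 1)) {w : ℝ} (hw : w ∈ Ioo (0:ℝ) 1) :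
    sSup {t | levelDF f t < w} = sSup (f '' Ioo 0 w) := by
  have hsub : Ioo 0 w ⊆ Ioo (0:ℝ) 1 := Ioo_subset_Ioo_right hw.2.le
  have himage_ne : (f '' Ioo 0 w).Nonempty := (nonempty_Ioo.2 hw.1).image f
  have himage_bdd : BddAbove (f '' Ioo 0 w) :=
    ⟨f w, forall_mem_image.2 fun u hu => hf (hsub hu) hw hu.2.le⟩
  have himage_sub : f '' Ioo 0 w ⊆ {t | levelDF f t < w} :=
    image_subset_iff.2 fun u hu => (levelDF_le hf (hsub hu) le_rfl).trans_lt hu.2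
  have hbound : ∀ t ∈ {t | levelDF f t < w}, t ≤ sSup (f '' Ioo 0 w) := by
    intro t ht
    by_contra! hlt
    refine (le_levelDF_of_Ioo_subset hw.1.le fun u hu => ⟨hsub hu, ?_⟩).not_gt ht
    exact (le_csSup himage_bdd (mem_image_of_mem f hu)).trans_lt hlt
  exact le_antisymm (csSup_le (himage_ne.mono himage_sub) hbound)
    (csSup_le_csSup ⟨_, hbound⟩ himage_ne himage_sub)

end SeminormFamilyPN

open SeminormFamilyPN

/-- Theorem 3.10: a monotone, separating family of seminorms `p(·,w)` on a real vector
space induces a Šerstnev PN-space via `ν_x(t) = m {w ∈ (0,1) | p(x,w) < t}`, whose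
quantile seminorms are the left limits `‖x‖_w = sup_{w' < w} p(x,w')`. -/
theorem spn_of_seminorm_family {V : Type*} [AddCommGroup V] [Module ℝ V]
    (p : V → ℝ → ℝ)
    (hnn : ∀ x : V, ∀ w ∈ Set.Ioo (0:ℝ) 1, 0 ≤ p x w)
    (hmono : ∀ x : V, MonotoneOn (p x) (Set.Ioo (0:ℝ) 1))
    (hsmul : ∀ (a : ℝ) (x : V), ∀ w ∈ Set.Ioo (0:ℝ) 1, p (a • x) w = |a| * p x w)
    (htri : ∀ x y : V, ∀ w ∈ Set.Ioo (0:ℝ) 1, p (x + y) w ≤ p x w + p y w)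
    (hsep : ∀ x : V, x ≠ 0 → ∃ w ∈ Set.Ioo (0:ℝ) 1, p x w ≠ 0) :
    ∃ S : SPN V,
      (∀ x : V, ∀ t : ℝ,
        S.nu x t = (MeasureTheory.volume {w | w ∈ Set.Ioo (0:ℝ) 1 ∧ p x w < t}).toReal) ∧
      (∀ x : V, ∀ w ∈ Set.Ioo (0:ℝ) 1,
        pnorm S x w = sSup {r : ℝ | ∃ w', 0 < w' ∧ w' < w ∧ r = p x w'}) := by
  have hzero_iff (x : V) : (∀ w ∈ Ioo (0:ℝ) 1, p x w = 0) ↔ x = 0 := by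
    refine ⟨fun hx => by_contra fun hne => ?_, fun hx w hw => ?_⟩
    · obtain ⟨w, hw, hpw⟩ := hsep x hne
      exact hpw (hx w hw)
    · simpa [hx] using hsmul 0 0 w hw
  let S : SPN V :=
    { nu := fun x => levelDF (p x)
      ddf := fun x => isDDF_levelDF (hnn x)
      proper := fun x => tendsto_levelDF_atTop (p x)
      nu_eq_iff := fun x => (levelDF_eq_H0_iff (hnn x) (hmono x)).trans (hzero_iff x)
      nu_add := fun x y => tauM_levelDF_le (hmono x) (hmono y) (htri x y)
      nu_smul := fun a ha x => levelDF_of_eq_mul (abs_pos.2 ha) (hsmul a x) }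
  refine ⟨S, fun _ _ => rfl, fun x w hw => ?_⟩
  have hset : {r : ℝ | ∃ w', 0 < w' ∧ w' < w ∧ r = p x w'} = p x '' Ioo 0 w := by
    ext r
    simp [eq_comm, and_assoc]
  rw [hset]
  exact sSup_levelDF_lt_eq (hmono x) hw
end
end

section
/- Uniform Boundedness Principle for PN-spaces: Let (V, ν) be a strongly complete Šerstnev PN-space under τ_M and (W, μ) a Šerstnev PN-space under τ_M, and let {T_n}_{n∈ℕ} be continuous linear operators V → W such that for every x ∈ V and every w' ∈ (0,1), sup_n ‖T_n x‖_{w'} < ∞. Then for every w' ∈ (0,1) there exists w ∈ (0,1) such that sup_n ‖T_n‖_{(w,w')} < ∞, where ‖T‖_{(w,w')} = sup{‖Tx‖_{w'} : ‖x‖_w ≤ 1}. -/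
open Filter Topology Set

noncomputable section

namespace SPNAux
open TopologicalSpace
variable {V : Type*} [AddCommGroup V] [Module ℝ V] (S : SPN V)

lemma nu_mono (x : V) : Monotone (S.nu x) := (S.ddf x).1
lemma nu_mem (x : V) (t : ℝ) : S.nu x t ∈ Set.Icc (0:ℝ) 1 := (S.ddf x).2.1 t
lemma nu_zero' (x : V) : S.nu x 0 = 0 := (S.ddf x).2.2.2.1
lemma nu_zero : S.nu 0 = H0 := (S.nu_eq_iff 0).mpr rfl

lemma nu_neg (x : V) (t : ℝ) : S.nu (-x) t = S.nu x t := by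
  have h := S.nu_smul (-1) (by norm_num) x t
  simpa using h

lemma zero_mem_set {x : V} {w : ℝ} (hw : 0 < w) : (0:ℝ) ∈ {t | S.nu x t < w} := by
  simp [nu_zero' S x, hw]

lemma bdd_set {x : V} {w : ℝ} (hw : w < 1) : BddAbove {t | S.nu x t < w} := by
  obtain ⟨t0, ht0⟩ : ∃ t0, w < S.nu x t0 :=
    ((S.proper x).eventually (eventually_gt_nhds hw)).exists
  refine ⟨t0, fun t ht => ?_⟩
  by_contra hc
  push_neg at hc
  exact absurd (nu_mono S x hc.le) (not_le.mpr (lt_trans ht ht0))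

lemma pnorm_nonneg {x : V} {w : ℝ} (hw : w ∈ Set.Ioo (0:ℝ) 1) : 0 ≤ pnorm S x w :=
  le_csSup (bdd_set S hw.2) (zero_mem_set S hw.1)

lemma pnorm_neg (x : V) (w : ℝ) : pnorm S (-x) w = pnorm S x w := by
  simp only [pnorm, nu_neg]

lemma pnorm_zero {w : ℝ} (hw : w ∈ Set.Ioo (0:ℝ) 1) : pnorm S (0:V) w = 0 := by
  have hset : {t | S.nu 0 t < w} = Set.Iic 0 := by
    ext t
    simp only [nu_zero, H0, Set.mem_setOf_eq, Set.mem_Iic]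
    by_cases h : 0 < t <;> simp [h, hw.1, not_lt.mp, hw.2.le]
    · constructor
      · intro hlt; linarith [hw.2]
      · intro hle; linarith
  rw [pnorm, hset, csSup_Iic]

/-- If `w ≤ ν_x t` then `‖x‖_w ≤ t`. -/
lemma pnorm_le_of_nu_ge {x : V} {w t : ℝ} (hw : 0 < w) (h : w ≤ S.nu x t) :
    pnorm S x w ≤ t := by
  refine csSup_le ⟨0, zero_mem_set S hw⟩ (fun t' ht' => ?_)
  by_contra hc
  push_neg at hc
  exact absurd (nu_mono S x hc.le) (not_le.mpr (lt_of_lt_of_le ht' h))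

/-- If `‖x‖_w < t` then `w ≤ ν_x t`. -/
lemma nu_ge_of_pnorm_lt {x : V} {w t : ℝ} (hw : w < 1) (h : pnorm S x w < t) :
    w ≤ S.nu x t := by
  by_contra hc
  push_neg at hc
  exact absurd (le_csSup (bdd_set S hw) hc) (not_le.mpr h)

lemma pnorm_mono_w {x : V} {v w : ℝ} (hv : 0 < v) (hw : w < 1) (hvw : v ≤ w) :
    pnorm S x v ≤ pnorm S x w :=
  csSup_le_csSup (bdd_set S hw) ⟨0, zero_mem_set S hv⟩
    (fun t ht => lt_of_lt_of_le ht hvw)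

lemma pnorm_add_le {x y : V} {w : ℝ} (hw : w ∈ Set.Ioo (0:ℝ) 1) :
    pnorm S (x + y) w ≤ pnorm S x w + pnorm S y w := by
  refine csSup_le ⟨0, zero_mem_set S hw.1⟩ (fun t ht => ?_)
  by_contra hc
  push_neg at hc
  set a := pnorm S x w
  set b := pnorm S y w
  set s := a + (t - a - b) / 2 with hs
  have hxa : w ≤ S.nu x s := nu_ge_of_pnorm_lt S hw.2 (by dsimp [s]; linarith)
  have hyb : w ≤ S.nu y (t - s) := nu_ge_of_pnorm_lt S hw.2 (by dsimp [s]; linarith)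
  have hmin : w ≤ min (S.nu x s) (S.nu y (t - s)) := le_min hxa hyb
  have hbdd : BddAbove (Set.range (fun s' => min (S.nu x s') (S.nu y (t - s')))) := by
    refine ⟨1, fun r hr => ?_⟩
    obtain ⟨s', rfl⟩ := hr
    exact le_trans (min_le_left _ _) (nu_mem S x s').2
  have htau : min (S.nu x s) (S.nu y (t - s)) ≤ tauM (S.nu x) (S.nu y) t :=
    le_ciSup hbdd s
  have := le_trans (le_trans hmin htau) (S.nu_add x y t)
  exact absurd this (not_le.mpr ht)

lemma pnorm_smul {x : V} {w : ℝ} (hw : w ∈ Set.Ioo (0:ℝ) 1) {a : ℝ} (ha : a ≠ 0) :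
    pnorm S (a • x) w = |a| * pnorm S x w := by
  have hA : {t | S.nu (a • x) t < w} = (fun s => |a| * s) '' {s | S.nu x s < w} := by
    ext t
    simp only [Set.mem_setOf_eq, Set.mem_image, S.nu_smul a ha]
    constructor
    · intro h
      exact ⟨t / |a|, h, by field_simp⟩
    · rintro ⟨s, hs, rfl⟩
      rwa [mul_comm, mul_div_assoc, div_self (abs_ne_zero.mpr ha), mul_one]
  have hmono : Monotone (fun s : ℝ => |a| * s) :=
    fun s t hst => mul_le_mul_of_nonneg_left hst (abs_nonneg a)
  have := hmono.map_csSup_of_continuousAt (A := {s | S.nu x s < w})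
    (Continuous.continuousAt (by continuity))
    ⟨0, zero_mem_set S hw.1⟩ (bdd_set S hw.2)
  rw [pnorm, hA, ← this]; rfl

/-- Any strong-open set containing a point contains a seminorm ball around it. -/
lemma mem_ball_of_isOpen {U : Set V} (hU : IsOpen[strongTop S] U) :
    ∀ x ∈ U, ∃ u ∈ Set.Ioo (0:ℝ) 1, ∃ ε > 0, ∀ y, pnorm S (y - x) u < ε → y ∈ U := by
  induction hU with
  | basic U hU =>
    obtain ⟨a, v, r, hv, hr, rfl⟩ := hU
    intro x hx
    refine ⟨v, hv, r - pnorm S (x - a) v, by simpa using hx, fun y hy => ?_⟩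
    have h3 : pnorm S (y - a) v ≤ pnorm S (y - x) v + pnorm S (x - a) v := by
      have := pnorm_add_le S (x := y - x) (y := x - a) hv
      rwa [sub_add_sub_cancel] at this
    simp only [Set.mem_setOf_eq]
    linarith
  | univ => exact fun x _ => ⟨1/2, by norm_num, 1, one_pos, fun y _ => trivial⟩
  | inter U U' _ _ ihU ihU' =>
    intro x hx
    obtain ⟨u₁, hu₁, ε₁, hε₁, h₁⟩ := ihU x hx.1
    obtain ⟨u₂, hu₂, ε₂, hε₂, h₂⟩ := ihU' x hx.2
    refine ⟨max u₁ u₂, ⟨lt_max_of_lt_left hu₁.1, max_lt hu₁.2 hu₂.2⟩,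
      min ε₁ ε₂, lt_min hε₁ hε₂, fun y hy => ?_⟩
    constructor
    · exact h₁ y (lt_of_le_of_lt (pnorm_mono_w S hu₁.1 (max_lt hu₁.2 hu₂.2) (le_max_left _ _))
        (lt_of_lt_of_le hy (min_le_left _ _)))
    · exact h₂ y (lt_of_le_of_lt (pnorm_mono_w S hu₂.1 (max_lt hu₁.2 hu₂.2) (le_max_right _ _))
        (lt_of_lt_of_le hy (min_le_right _ _)))
  | sUnion s _ ih =>
    intro x hx
    obtain ⟨U, hUs, hxU⟩ := hx
    obtain ⟨u, hu, ε, hε, h⟩ := ih U hUs x hxU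
    exact ⟨u, hu, ε, hε, fun y hy => ⟨U, hUs, h y hy⟩⟩

variable {W : Type*} [AddCommGroup W] [Module ℝ W]

/-- A continuous linear map is bounded from some domain seminorm to a given target seminorm. -/
lemma exists_op_bound (S' : SPN W) {T : V →ₗ[ℝ] W}
    (hc : @Continuous V W (strongTop S) (strongTop S') T) {w' : ℝ}
    (hw' : w' ∈ Set.Ioo (0:ℝ) 1) :
    ∃ u ∈ Set.Ioo (0:ℝ) 1, ∃ ε > 0, ∀ x, ε * pnorm S' (T x) w' ≤ pnorm S x u := by
  have hUopen : IsOpen[strongTop S'] {y | pnorm S' (y - 0) w' < 1} :=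
    TopologicalSpace.GenerateOpen.basic _ ⟨0, w', 1, hw', one_pos, rfl⟩
  have hpre : IsOpen[strongTop S] (T ⁻¹' {y | pnorm S' (y - 0) w' < 1}) :=
    @Continuous.isOpen_preimage V W (strongTop S) (strongTop S') T hc _ hUopen
  have h0 : (0:V) ∈ T ⁻¹' {y | pnorm S' (y - 0) w' < 1} := by
    simp [pnorm_zero S' hw']
  obtain ⟨u, hu, ε, hε, hball⟩ := mem_ball_of_isOpen S hpre 0 h0
  refine ⟨u, hu, ε, hε, fun x => ?_⟩
  have key : ∀ s > 0, ε * pnorm S' (T x) w' < pnorm S x u + s := by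
    intro s hs
    have hps : 0 < pnorm S x u + s := lt_of_lt_of_le hs (by linarith [pnorm_nonneg S (x := x) hu])
    set c : ℝ := ε / (pnorm S x u + s) with hc'
    have hcpos : 0 < c := div_pos hε hps
    have h1 : pnorm S (c • x - 0) u < ε := by
      rw [sub_zero, pnorm_smul S hu (ne_of_gt hcpos), abs_of_pos hcpos, hc']
      calc ε / (pnorm S x u + s) * pnorm S x u
          < ε / (pnorm S x u + s) * (pnorm S x u + s) := by
            apply mul_lt_mul_of_pos_left (by linarith) (div_pos hε hps)
        _ = ε := div_mul_cancel₀ ε (ne_of_gt hps)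
    have h2 := hball (c • x) h1
    simp only [Set.mem_preimage, Set.mem_setOf_eq, map_smul, sub_zero] at h2
    rw [pnorm_smul S' hw' (ne_of_gt hcpos), abs_of_pos hcpos] at h2
    have h3 : pnorm S' (T x) w' * ε < pnorm S x u + s := by
      rwa [hc', div_mul_eq_mul_div, div_lt_one hps, mul_comm] at h2
    linarith
  exact le_of_forall_pos_lt_add (fun s hs => key s hs)

/-- Reverse triangle helper: `‖y‖ ≤ ‖x + y‖ + ‖x‖`. -/
lemma pnorm_le_add_left {x y : V} {w : ℝ} (hw : w ∈ Set.Ioo (0:ℝ) 1) :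
    pnorm S y w ≤ pnorm S (x + y) w + pnorm S x w := by
  have h := pnorm_add_le S (x := x + y) (y := -x) hw
  rw [pnorm_neg] at h
  have he : x + y + -x = y := by abel
  rwa [he] at h

end SPNAux

open SPNAux in
theorem spn_uniform_boundedness' {V W : Type*} [AddCommGroup V] [Module ℝ V]
    [AddCommGroup W] [Module ℝ W]
    (S : SPN V) (S' : SPN W) (hV : StrongComplete S)
    (T : ℕ → V →ₗ[ℝ] W)
    (hTc : ∀ n, @Continuous V W (strongTop S) (strongTop S') (T n))
    (hptbdd : ∀ x : V, ∀ w' ∈ Set.Ioo (0:ℝ) 1, ∃ C : ℝ, ∀ n, pnorm S' (T n x) w' ≤ C) :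
    ∀ w' ∈ Set.Ioo (0:ℝ) 1, ∃ w ∈ Set.Ioo (0:ℝ) 1, ∃ C : ℝ,
      ∀ n, ∀ x : V, pnorm S x w ≤ 1 → pnorm S' (T n x) w' ≤ C := by
  intro w' hw'
  by_contra hcon
  push_neg at hcon
  -- hcon : ∀ w ∈ Ioo 0 1, ∀ C, ∃ n x, pnorm S x w ≤ 1 ∧ C < pnorm S' (T n x) w'
  -- Step 1: density of unboundedness in every ball.
  have dens : ∀ v ∈ Set.Ioo (0:ℝ) 1, ∀ (c : V), ∀ r > (0:ℝ), ∀ C : ℝ,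
      ∃ n z, pnorm S (z - c) v ≤ r ∧ C < pnorm S' (T n z) w' := by
    intro v hv c r hr C
    obtain ⟨Cc, hCc⟩ := hptbdd c w' hw'
    obtain ⟨n, x, hx1, hx2⟩ := hcon v hv ((C + Cc) / r)
    refine ⟨n, c + r • x, ?_, ?_⟩
    · rw [add_sub_cancel_left, pnorm_smul S hv (ne_of_gt hr), abs_of_pos hr]
      calc r * pnorm S x v ≤ r * 1 := mul_le_mul_of_nonneg_left hx1 hr.le
        _ = r := mul_one r
    · have hTz : (T n) (c + r • x) = (T n) c + r • (T n) x := by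
        rw [map_add, map_smul]
      have hrev : pnorm S' (r • (T n) x) w'
          ≤ pnorm S' ((T n) c + r • (T n) x) w' + pnorm S' ((T n) c) w' :=
        pnorm_le_add_left S' hw'
      rw [pnorm_smul S' hw' (ne_of_gt hr), abs_of_pos hr] at hrev
      have h2 : C + Cc < r * pnorm S' ((T n) x) w' := by
        have := mul_lt_mul_of_pos_left hx2 hr
        rwa [mul_div_cancel₀ _ (ne_of_gt hr)] at this
      rw [hTz]
      have := hCc n
      linarith
  -- Step 2: the inductive step producing nested balls.
  have step : ∀ (k : ℕ) (c : V) (r v : ℝ), 0 < r → v ∈ Set.Ioo (0:ℝ) 1 →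
      ∃ (c' : V) (r' v' : ℝ) (n : ℕ), 0 < r' ∧ v' ∈ Set.Ioo (0:ℝ) 1 ∧
        r' ≤ (1/2:ℝ)^(k+1) ∧ 1 - (1/2:ℝ)^(k+1) ≤ v' ∧
        ∀ z, pnorm S (z - c') v' ≤ r' →
          pnorm S (z - c) v ≤ r ∧ (k:ℝ) < pnorm S' (T n z) w' := by
    intro k c r v hr hv
    obtain ⟨n, z0, hz0, hz0'⟩ := dens v hv c (r/2) (by linarith) k
    obtain ⟨u, hu, ε, hε, hbd⟩ := exists_op_bound S S' (hTc n) hw'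
    set δ := pnorm S' ((T n) z0) w' - k with hδ
    have hδpos : 0 < δ := by simp only [hδ]; linarith
    have hpow : (0:ℝ) < (1/2:ℝ)^(k+1) := by positivity
    set v' := max (max v u) (1 - (1/2:ℝ)^(k+1)) with hv'def
    have hv' : v' ∈ Set.Ioo (0:ℝ) 1 := by
      constructor
      · exact lt_max_of_lt_left (lt_max_of_lt_left hv.1)
      · exact max_lt (max_lt hv.2 hu.2) (by linarith)
    set r' := min (min (r/2) ((1/2:ℝ)^(k+1))) (ε * δ / 2) with hr'def
    have hr'pos : 0 < r' := by
      apply lt_min (lt_min (by linarith) hpow)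
      positivity
    refine ⟨z0, r', v', n, hr'pos, hv',
      le_trans (min_le_left _ _) (min_le_right _ _), le_max_right _ _, fun z hz => ?_⟩
    have hvv' : v ≤ v' := le_trans (le_max_left _ _) (le_max_left _ _)
    have huv' : u ≤ v' := le_trans (le_max_right _ _) (le_max_left _ _)
    have hzv : pnorm S (z - z0) v ≤ r' :=
      le_trans (pnorm_mono_w S hv.1 hv'.2 hvv') hz
    have hzu : pnorm S (z - z0) u ≤ r' :=
      le_trans (pnorm_mono_w S hu.1 hv'.2 huv') hz
    constructor
    · have htri := pnorm_add_le S (x := z - z0) (y := z0 - c) hv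
      rw [sub_add_sub_cancel] at htri
      have hr'half : r' ≤ r/2 := le_trans (min_le_left _ _) (min_le_left _ _)
      linarith
    · -- pnorm (T n z) ≥ pnorm (T n z0) - pnorm (T n (z0 - z)) > k
      have hsplit : pnorm S' ((T n) z0) w'
          ≤ pnorm S' ((T n) z0 - (T n) z + (T n) z) w' + 0 := by
        rw [sub_add_cancel, add_zero]
      have htri : pnorm S' ((T n) z0) w'
          ≤ pnorm S' ((T n) z0 - (T n) z) w' + pnorm S' ((T n) z) w' := by
        have h := pnorm_add_le S' (x := (T n) z0 - (T n) z) (y := (T n) z) hw'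
        rwa [sub_add_cancel] at h
      have hbound : ε * pnorm S' ((T n) z0 - (T n) z) w' ≤ ε * (δ / 2) := by
        have h1 : (T n) z0 - (T n) z = (T n) (z0 - z) := by rw [map_sub]
        rw [h1]
        refine le_trans (hbd (z0 - z)) ?_
        have hsym : pnorm S (z0 - z) u = pnorm S (z - z0) u := by
          rw [← pnorm_neg S (z - z0) u, neg_sub]
        rw [hsym]
        calc pnorm S (z - z0) u ≤ r' := hzu
          _ ≤ ε * δ / 2 := min_le_right _ _
          _ = ε * (δ / 2) := by ring
      have hsmall : pnorm S' ((T n) z0 - (T n) z) w' ≤ δ / 2 :=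
        le_of_mul_le_mul_left hbound hε
      have hz0big : (k:ℝ) + δ ≤ pnorm S' ((T n) z0) w' := by simp only [hδ]; linarith
      linarith
  -- Step 3: build the sequence via choice + recursion.
  classical
  let St := {p : V × ℝ × ℝ // 0 < p.2.1 ∧ p.2.2 ∈ Set.Ioo (0:ℝ) 1}
  have step' : ∀ (k : ℕ) (s : St), ∃ (s' : St) (n : ℕ),
      s'.1.2.1 ≤ (1/2:ℝ)^(k+1) ∧ 1 - (1/2:ℝ)^(k+1) ≤ s'.1.2.2 ∧
      ∀ z, pnorm S (z - s'.1.1) s'.1.2.2 ≤ s'.1.2.1 →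
        pnorm S (z - s.1.1) s.1.2.2 ≤ s.1.2.1 ∧ (k:ℝ) < pnorm S' (T n z) w' := by
    intro k s
    obtain ⟨c', r', v', n, h1, h2, h3, h4, h5⟩ := step k s.1.1 s.1.2.1 s.1.2.2 s.2.1 s.2.2
    exact ⟨⟨(c', r', v'), h1, h2⟩, n, h3, h4, h5⟩
  choose F N hF1 hF2 hF3 using step'
  let s0 : St := ⟨(0, 1, 1/2), by norm_num, by norm_num⟩
  let seq : ℕ → St := fun k => Nat.rec s0 (fun k s => F k s) k
  have hseq : ∀ k, seq (k+1) = F k (seq k) := fun k => rfl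
  set c : ℕ → V := fun k => (seq k).1.1 with hc
  set r : ℕ → ℝ := fun k => (seq k).1.2.1 with hrr
  set v : ℕ → ℝ := fun k => (seq k).1.2.2 with hvv
  have hrpos : ∀ k, 0 < r k := fun k => (seq k).2.1
  have hvIoo : ∀ k, v k ∈ Set.Ioo (0:ℝ) 1 := fun k => (seq k).2.2
  have hrle : ∀ k, r (k+1) ≤ (1/2:ℝ)^(k+1) := fun k => hF1 k (seq k)
  have hvge : ∀ k, 1 - (1/2:ℝ)^(k+1) ≤ v (k+1) := fun k => hF2 k (seq k)
  have hnest : ∀ k z, pnorm S (z - c (k+1)) (v (k+1)) ≤ r (k+1) →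
      pnorm S (z - c k) (v k) ≤ r k ∧ (k:ℝ) < pnorm S' (T (N k (seq k)) z) w' :=
    fun k z hz => hF3 k (seq k) z hz
  -- membership of centers in balls
  have hself : ∀ k, pnorm S (c k - c k) (v k) ≤ r k := fun k => by
    rw [sub_self, pnorm_zero S (hvIoo k)]; exact (hrpos k).le
  have hchain : ∀ k m, k ≤ m → ∀ z,
      pnorm S (z - c m) (v m) ≤ r m → pnorm S (z - c k) (v k) ≤ r k := by
    intro k m hkm
    induction m, hkm using Nat.le_induction with
    | base => exact fun z hz => hz
    | succ m' hkm' ih => exact fun z hz => ih z (hnest m' z hz).1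
  have hmem : ∀ k m, k ≤ m → pnorm S (c m - c k) (v k) ≤ r k :=
    fun k m hkm => hchain k m hkm (c m) (hself m)
  -- Step 4: Cauchy.
  have hcauchy : StrongCauchy S c := by
    intro t ht
    obtain ⟨K, hK⟩ : ∃ K : ℕ, (1/2:ℝ)^K < t := exists_pow_lt_of_lt_one ht (by norm_num)
    refine ⟨K+1, fun m hm n hn => ?_⟩
    have h1 : pnorm S (c n - c (K+1)) (v (K+1)) ≤ r (K+1) := hmem (K+1) n hn
    have h2 : pnorm S (c (K+1) - c m) (v (K+1)) ≤ r (K+1) := by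
      rw [← neg_sub (c m) (c (K+1)), pnorm_neg]; exact hmem (K+1) m hm
    have htri := pnorm_add_le S (x := c n - c (K+1)) (y := c (K+1) - c m) (hvIoo (K+1))
    rw [sub_add_sub_cancel] at htri
    have hsum : pnorm S (c n - c m) (v (K+1)) < t := by
      have hKK : (2:ℝ) * (1/2:ℝ)^(K+1) = (1/2:ℝ)^K := by ring
      have := hrle K
      nlinarith [hrle K]
    have hnu : v (K+1) ≤ S.nu (c n - c m) t :=
      nu_ge_of_pnorm_lt S (hvIoo (K+1)).2 hsum
    have hpow : (1/2:ℝ)^(K+1) < t := by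
      have h05 : (1/2:ℝ)^(K+1) ≤ (1/2:ℝ)^K :=
        pow_le_pow_of_le_one (by norm_num) (by norm_num) (Nat.le_succ K)
      linarith
    have := hvge K
    linarith
  obtain ⟨p, hp⟩ := hV c hcauchy
  -- Step 5: p lies in every ball.
  have hpin : ∀ k, pnorm S (p - c (k+1)) (v (k+1)) ≤ r (k+1) := by
    intro k
    refine le_of_forall_pos_le_add (fun s hs => ?_)
    set t := min s ((1 - v (k+1)) / 2) with htdef
    have ht : 0 < t := lt_min hs (by have := (hvIoo (k+1)).2; linarith)
    obtain ⟨M, hM⟩ := hp t ht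
    set m := max M (k+1) with hmdef
    have hMm : M ≤ m := le_max_left _ _
    have hk1m : k+1 ≤ m := le_max_right _ _
    have hnu : 1 - t < S.nu (c m - p) t := hM m hMm
    have hvlt : v (k+1) ≤ S.nu (c m - p) t := by
      have ht2 : t ≤ (1 - v (k+1)) / 2 := min_le_right _ _
      linarith
    have h1 : pnorm S (c m - p) (v (k+1)) ≤ t :=
      pnorm_le_of_nu_ge S (hvIoo (k+1)).1 hvlt
    have h1' : pnorm S (p - c m) (v (k+1)) ≤ t := by
      rw [← neg_sub (c m) p, pnorm_neg]; exact h1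
    have h2 : pnorm S (c m - c (k+1)) (v (k+1)) ≤ r (k+1) := hmem (k+1) m hk1m
    have htri := pnorm_add_le S (x := p - c m) (y := c m - c (k+1)) (hvIoo (k+1))
    rw [sub_add_sub_cancel] at htri
    have ht1 : t ≤ s := min_le_left _ _
    linarith
  -- Step 6: contradiction with pointwise boundedness at p.
  obtain ⟨C, hC⟩ := hptbdd p w' hw'
  set k := ⌈C⌉₊ + 1 with hkdef
  have hklt : (k:ℝ) < pnorm S' (T (N k (seq k)) p) w' := (hnest k p (hpin k)).2
  have hCk : C ≤ (k:ℝ) := by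
    have := Nat.le_ceil C
    push_cast [hkdef]
    linarith
  exact absurd (hC (N k (seq k))) (not_le.mpr (lt_of_le_of_lt hCk hklt))

/-- Uniform Boundedness Principle for PN-spaces: if a family of continuous linear
operators from a strongly complete Šerstnev PN-space is pointwise bounded in every
seminorm `‖·‖_{w'}`, then for each `w'` there is a `w` with `sup_n ‖T_n‖_{(w,w')} < ∞`. -/
theorem spn_uniform_boundedness {V W : Type*} [AddCommGroup V] [Module ℝ V]
    [AddCommGroup W] [Module ℝ W]
    (S : SPN V) (S' : SPN W) (hV : StrongComplete S)
    (T : ℕ → V →ₗ[ℝ] W)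
    (hTc : ∀ n, @Continuous V W (strongTop S) (strongTop S') (T n))
    (hptbdd : ∀ x : V, ∀ w' ∈ Set.Ioo (0:ℝ) 1, ∃ C : ℝ, ∀ n, pnorm S' (T n x) w' ≤ C) :
    ∀ w' ∈ Set.Ioo (0:ℝ) 1, ∃ w ∈ Set.Ioo (0:ℝ) 1, ∃ C : ℝ,
      ∀ n, ∀ x : V, pnorm S x w ≤ 1 → pnorm S' (T n x) w' ≤ C :=
  spn_uniform_boundedness' S S' hV T hTc hptbdd
end
end
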